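/- arXiv:1501.06799 — 2 statements merged into one kernel-verified Lean document; each statement's English description precedes it below -/
import Mathlib

section
/- For all integers n ≥ 1 and k ≥ 1, the number of subsets E of {0, 1, ..., kn-1} of cardinality n satisfying the ballot condition — for every j with 1 ≤ j ≤ kn, k times the number of elements of E that are smaller than j is at least j — is equal to (1/n)·C(kn, n-1); equivalently, n times this number of subsets equals C(kn, n-1). -/
open Finset

namespace NKC

open scoped Classical

variable (k m : ℕ)

/-- step function: `k-1` on `E`, `-1` off `E`. -/
def dfun (E : Finset (ZMod m)) (x : ZMod m) : ℤ :=
  if x ∈ E then (k : ℤ) - 1 else -1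

/-- partial sums of steps. -/
def pf (E : Finset (ZMod m)) (j : ℕ) : ℤ :=
  ∑ i ∈ Finset.range j, dfun k m E (i : ZMod m)

/-- `r` is a good rotation for `E`. -/
def Good (E : Finset (ZMod m)) (r : ℕ) : Prop :=
  ∀ j, 1 ≤ j → j < m → 0 ≤ pf k m E (r + j) - pf k m E r

lemma pf_zero (E : Finset (ZMod m)) : pf k m E 0 = 0 := by simp [pf]

lemma pf_succ (E : Finset (ZMod m)) (j : ℕ) :
    pf k m E (j + 1) = pf k m E j + dfun k m E (j : ZMod m) := by
  rw [pf, Finset.sum_range_succ, ← pf]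

lemma pf_formula (E : Finset (ZMod m)) (j : ℕ) :
    pf k m E j =
      k * (((Finset.range j).filter (fun i : ℕ => ((i : ZMod m) ∈ E))).card : ℤ) - j := by
  induction j with
  | zero => simp [pf]
  | succ j ih =>
    rw [pf_succ, ih, dfun, Finset.range_add_one, Finset.filter_insert]
    by_cases h : (j : ZMod m) ∈ E
    · rw [if_pos h, if_pos h, Finset.card_insert_of_notMem (by simp)]
      push_cast; ring
    · rw [if_neg h, if_neg h]; push_cast; ring

lemma sum_range_cast [NeZero m] (g : ZMod m → ℤ) :
    ∑ i ∈ Finset.range m, g (i : ZMod m) = ∑ x : ZMod m, g x := by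
  refine Finset.sum_nbij' (fun i : ℕ => (i : ZMod m)) (fun x => x.val) ?_ ?_ ?_ ?_ ?_
  · intro a ha; exact Finset.mem_univ _
  · intro x hx; exact Finset.mem_range.2 (ZMod.val_lt x)
  · intro a ha; exact ZMod.val_cast_of_lt (Finset.mem_range.1 ha)
  · intro x hx; exact ZMod.natCast_rightInverse x
  · intro a ha; rfl

lemma pf_m [NeZero m] (E : Finset (ZMod m)) :
    pf k m E m = ∑ x : ZMod m, dfun k m E x := by
  rw [pf, sum_range_cast]

lemma sum_dfun [NeZero m] (E : Finset (ZMod m)) :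
    ∑ x : ZMod m, dfun k m E x = k * E.card - m := by
  have h : ∀ x : ZMod m, dfun k m E x = (if x ∈ E then (k:ℤ) else 0) - 1 := by
    intro x; rw [dfun]; split <;> ring
  rw [Finset.sum_congr rfl (fun x _ => h x), Finset.sum_sub_distrib]
  rw [Finset.sum_ite_mem, Finset.univ_inter, Finset.sum_const, Finset.sum_const]
  simp [ZMod.card, mul_comm]

lemma pf_add (E : Finset (ZMod m)) (r j : ℕ) :
    pf k m E (r + j) = pf k m E r
      + ∑ i ∈ Finset.range j, dfun k m E ((r + i : ℕ) : ZMod m) := by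
  rw [pf, Finset.sum_range_add, ← pf]

lemma pf_period [NeZero m] {n : ℕ} (hm : m = k * n + 1) (E : Finset (ZMod m))
    (hE : E.card = n) (j : ℕ) :
    pf k m E (j + m) = pf k m E j - 1 := by
  rw [pf_add]
  have h1 : ∀ i ∈ Finset.range m,
      dfun k m E ((j + i : ℕ) : ZMod m)
        = (fun x => dfun k m E ((j : ZMod m) + x)) ((i : ℕ) : ZMod m) := by
    intro i _; push_cast; rfl
  rw [Finset.sum_congr rfl h1, sum_range_cast m (fun x => dfun k m E ((j : ZMod m) + x))]
  have h2 : ∑ x : ZMod m, dfun k m E ((j : ZMod m) + x) = ∑ x : ZMod m, dfun k m E x :=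
    Fintype.sum_equiv (Equiv.addLeft (j : ZMod m)) _ _ (fun x => rfl)
  have hm' : (m : ℤ) = k * n + 1 := by rw [hm]; push_cast; ring
  rw [h2, sum_dfun, hE, hm']; ring

/-- the cycle lemma: there is exactly one good rotation. -/
lemma existsUnique_good [NeZero m] {n : ℕ} (hm : m = k * n + 1)
    (E : Finset (ZMod m)) (hE : E.card = n) :
    ∃! r, r < m ∧ Good k m E r := by
  have hm0 : 0 < m := Nat.pos_of_ne_zero (NeZero.ne m)
  have uniq : ∀ r r', r < r' → r' < m → Good k m E r → Good k m E r' → False := by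
    intro r r' hrr' hr'm hg hg'
    have h1 : 0 ≤ pf k m E (r + (r' - r)) - pf k m E r :=
      hg (r' - r) (by omega) (by omega)
    have h2 : 0 ≤ pf k m E (r' + (m + r - r')) - pf k m E r' :=
      hg' (m + r - r') (by omega) (by omega)
    rw [show r + (r' - r) = r' by omega] at h1
    rw [show r' + (m + r - r') = r + m by omega] at h2
    rw [pf_period k m hm E hE r] at h2
    linarith
  obtain ⟨r1, hr1mem, hr1min⟩ :=
    Finset.exists_min_image (Finset.range m) (pf k m E) ⟨0, Finset.mem_range.2 hm0⟩
  set T : Finset ℕ := (Finset.range m).filter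
    (fun i => ∀ i' ∈ Finset.range m, pf k m E i ≤ pf k m E i') with hT
  have hTne : T.Nonempty := ⟨r1, Finset.mem_filter.2 ⟨hr1mem, hr1min⟩⟩
  set r0 := T.min' hTne with hr0
  have hr0T : r0 ∈ T := T.min'_mem hTne
  have hr0m : r0 < m := Finset.mem_range.1 (Finset.mem_filter.1 hr0T).1
  have hr0min : ∀ i' ∈ Finset.range m, pf k m E r0 ≤ pf k m E i' :=
    (Finset.mem_filter.1 hr0T).2
  have hbefore : ∀ i < r0, pf k m E r0 + 1 ≤ pf k m E i := by
    intro i hi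
    have him : i ∈ Finset.range m := Finset.mem_range.2 (lt_trans hi hr0m)
    have hiT : i ∉ T := fun hiT => absurd (T.min'_le i hiT) (by omega)
    rw [hT, Finset.mem_filter] at hiT
    push_neg at hiT
    obtain ⟨i', hi'mem, hi'⟩ := hiT him
    have := hr0min i' hi'mem
    omega
  have hgood : Good k m E r0 := by
    intro j hj1 hjm
    rcases lt_or_ge (r0 + j) m with hlt | hge
    · have := hr0min (r0 + j) (Finset.mem_range.2 hlt)
      linarith
    · have hi : r0 + j - m < r0 := by omega
      have heq : r0 + j = (r0 + j - m) + m := by omega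
      rw [heq, pf_period k m hm E hE]
      have := hbefore (r0 + j - m) hi
      linarith
  refine ⟨r0, ⟨hr0m, hgood⟩, ?_⟩
  rintro r ⟨hrm, hg⟩
  rcases lt_trichotomy r r0 with h | h | h
  · exact absurd (uniq r r0 h hr0m hg hgood) not_false
  · exact h
  · exact absurd (uniq r0 r h hrm hgood hg) not_false

def shiftSet (E : Finset (ZMod m)) (r : ℕ) : Finset (ZMod m) :=
  E.image (fun x => x - (r : ZMod m))

def unshift (E : Finset (ZMod m)) (r : ℕ) : Finset (ZMod m) :=
  E.image (fun x => x + (r : ZMod m))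

lemma mem_shiftSet (E : Finset (ZMod m)) (r : ℕ) (x : ZMod m) :
    x ∈ shiftSet m E r ↔ x + (r : ZMod m) ∈ E := by
  simp only [shiftSet, Finset.mem_image, sub_eq_iff_eq_add]
  exact ⟨fun ⟨e, he, h⟩ => h ▸ he, fun h => ⟨x + r, h, rfl⟩⟩

lemma card_shiftSet (E : Finset (ZMod m)) (r : ℕ) :
    (shiftSet m E r).card = E.card :=
  Finset.card_image_of_injective _ (fun a b h => by
    have := congrArg (· + (r : ZMod m)) h; simpa using this)

lemma card_unshift (E : Finset (ZMod m)) (r : ℕ) :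
    (unshift m E r).card = E.card :=
  Finset.card_image_of_injective _ (fun a b h => by
    have := congrArg (· - (r : ZMod m)) h; simpa using this)

lemma shiftSet_unshift (E : Finset (ZMod m)) (r : ℕ) :
    shiftSet m (unshift m E r) r = E := by
  rw [shiftSet, unshift, Finset.image_image]
  simp [Function.comp_def]

lemma unshift_shiftSet (E : Finset (ZMod m)) (r : ℕ) :
    unshift m (shiftSet m E r) r = E := by
  rw [shiftSet, unshift, Finset.image_image]
  simp [Function.comp_def]

lemma dfun_shiftSet (E : Finset (ZMod m)) (r : ℕ) (x : ZMod m) :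
    dfun k m (shiftSet m E r) x = dfun k m E (x + (r : ZMod m)) := by
  simp only [dfun, mem_shiftSet]

lemma pf_shiftSet (E : Finset (ZMod m)) (r j : ℕ) :
    pf k m (shiftSet m E r) j = pf k m E (r + j) - pf k m E r := by
  rw [pf_add, pf]
  have h : ∀ i ∈ Finset.range j,
      dfun k m (shiftSet m E r) (i : ZMod m) = dfun k m E ((r + i : ℕ) : ZMod m) := by
    intro i _
    rw [dfun_shiftSet]
    push_cast
    rw [add_comm]
  rw [Finset.sum_congr rfl h]
  ring

lemma good_shiftSet_zero (E : Finset (ZMod m)) (r : ℕ) :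
    Good k m (shiftSet m E r) 0 ↔ Good k m E r := by
  constructor
  · intro hg j hj1 hjm
    have := hg j hj1 hjm
    rwa [zero_add, pf_zero, pf_shiftSet, sub_zero] at this
  · intro hg j hj1 hjm
    rw [zero_add, pf_zero, pf_shiftSet, sub_zero]
    exact hg j hj1 hjm

/-- main counting identity: the number of `n`-subsets equals `m` times the number of
good (ballot) subsets. -/
lemma card_powersetCard_eq [NeZero m] {n : ℕ} (hm : m = k * n + 1) :
    (Finset.powersetCard n (Finset.univ : Finset (ZMod m))).card
      = ((Finset.powersetCard n (Finset.univ : Finset (ZMod m))).filter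
          (fun E => Good k m E 0)).card * m := by
  classical
  set A := Finset.powersetCard n (Finset.univ : Finset (ZMod m)) with hA
  set G := A.filter (fun E => Good k m E 0) with hG
  have exu : ∀ E : Finset (ZMod m), E.card = n → ∃! r, r < m ∧ Good k m E r :=
    fun E hE => existsUnique_good k m hm E hE
  choose! gi hgi1 hgi2 using fun E hE => (exu E hE).exists
  have huniq : ∀ (E : Finset (ZMod m)) (hE : E.card = n) (r : ℕ),
      r < m → Good k m E r → r = gi E := by
    intro E hE r hrm hg
    obtain ⟨r0, h0, hu⟩ := exu E hE
    rw [hu r ⟨hrm, hg⟩, hu (gi E) ⟨hgi1 E hE, hgi2 E hE⟩]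
  have key : A.card = (G ×ˢ Finset.range m).card := by
    refine Finset.card_nbij' (fun E => (shiftSet m E (gi E), gi E))
      (fun p => unshift m p.1 p.2) ?_ ?_ ?_ ?_
    · intro E hE
      have hEc : E.card = n := Finset.mem_powersetCard_univ.1 hE
      refine Finset.mem_product.2 ⟨Finset.mem_filter.2 ⟨?_, ?_⟩, ?_⟩
      · exact Finset.mem_powersetCard_univ.2 (by rw [card_shiftSet, hEc])
      · exact (good_shiftSet_zero k m E (gi E)).2 (hgi2 E hEc)
      · exact Finset.mem_range.2 (hgi1 E hEc)
    · intro p hp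
      have h1 := Finset.mem_filter.1 (Finset.mem_product.1 hp).1
      have hc : p.1.card = n := Finset.mem_powersetCard_univ.1 h1.1
      exact Finset.mem_powersetCard_univ.2 (by rw [card_unshift, hc])
    · intro E hE
      exact unshift_shiftSet m E (gi E)
    · intro p hp
      have h1 := Finset.mem_filter.1 (Finset.mem_product.1 hp).1
      have hr := Finset.mem_range.1 (Finset.mem_product.1 hp).2
      have hc : p.1.card = n := Finset.mem_powersetCard_univ.1 h1.1
      have hcu : (unshift m p.1 p.2).card = n := by rw [card_unshift, hc]
      have hgood : Good k m (unshift m p.1 p.2) p.2 := by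
        rw [← good_shiftSet_zero, shiftSet_unshift]
        exact h1.2
      have hgi : p.2 = gi (unshift m p.1 p.2) := huniq _ hcu p.2 hr hgood
      ext : 1
      · simp only [← hgi, shiftSet_unshift]
      · simp only [← hgi]
  rw [key, Finset.card_product, Finset.card_range]

section Emb

variable (k n : ℕ)

/-- embedding of subsets of `Fin (k*n)` into subsets of `ZMod (k*n+1)`. -/
def emb (F : Finset (Fin (k * n))) : Finset (ZMod (k * n + 1)) :=
  F.image (fun e : Fin (k * n) => ((e : ℕ) : ZMod (k * n + 1)))

/-- the inverse map. -/
def backSet (E' : Finset (ZMod (k * n + 1))) : Finset (Fin (k * n)) :=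
  Finset.univ.filter (fun i : Fin (k * n) => ((i : ℕ) : ZMod (k * n + 1)) ∈ E')

lemma cast_inj_lt {a b : ℕ} (ha : a < k * n + 1) (hb : b < k * n + 1)
    (h : (a : ZMod (k * n + 1)) = b) : a = b := by
  have := congrArg ZMod.val h
  rwa [ZMod.val_cast_of_lt ha, ZMod.val_cast_of_lt hb] at this

lemma emb_injective : Function.Injective (fun e : Fin (k * n) => ((e : ℕ) : ZMod (k * n + 1))) := by
  intro a b h
  exact Fin.ext (cast_inj_lt k n (by omega) (by omega) h)

lemma card_emb (F : Finset (Fin (k * n))) : (emb k n F).card = F.card := by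
  rw [emb]
  exact Finset.card_image_of_injective _ (emb_injective k n)

lemma back_emb (F : Finset (Fin (k * n))) : backSet k n (emb k n F) = F := by
  ext i
  simp only [backSet, emb, Finset.mem_filter, Finset.mem_univ, true_and, Finset.mem_image]
  constructor
  · rintro ⟨e, he, hc⟩
    rwa [emb_injective k n hc] at he
  · intro hi; exact ⟨i, hi, rfl⟩

lemma emb_back (E' : Finset (ZMod (k * n + 1)))
    (htop : ((k * n : ℕ) : ZMod (k * n + 1)) ∉ E') :
    emb k n (backSet k n E') = E' := by
  ext x
  simp only [emb, backSet, Finset.mem_image, Finset.mem_filter, Finset.mem_univ, true_and]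
  constructor
  · rintro ⟨i, hi, rfl⟩; exact hi
  · intro hx
    have hvx : ((x.val : ℕ) : ZMod (k * n + 1)) = x := ZMod.natCast_rightInverse x
    have hne : x.val ≠ k * n := by
      intro h
      apply htop
      rw [h] at hvx
      rwa [hvx]
    have hlt : x.val < k * n := by
      have := ZMod.val_lt x
      omega
    exact ⟨⟨x.val, hlt⟩, by rwa [hvx], hvx⟩

lemma count_emb (F : Finset (Fin (k * n))) (j : ℕ) (hj : j ≤ k * n) :
    ((Finset.range j).filter (fun i : ℕ => ((i : ZMod (k * n + 1)) ∈ emb k n F))).card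
      = (F.filter (fun e : Fin (k * n) => (e : ℕ) < j)).card := by
  symm
  refine Finset.card_bij (fun e _ => (e : ℕ)) ?_ ?_ ?_
  · intro e he
    obtain ⟨heF, hej⟩ := Finset.mem_filter.1 he
    refine Finset.mem_filter.2 ⟨Finset.mem_range.2 hej, ?_⟩
    exact Finset.mem_image.2 ⟨e, heF, rfl⟩
  · intro a ha b hb h
    exact Fin.ext (by simpa using h)
  · intro b hb
    obtain ⟨hbj, hbm⟩ := Finset.mem_filter.1 hb
    have hbj' : b < j := Finset.mem_range.1 hbj
    obtain ⟨e, heF, hce⟩ := Finset.mem_image.1 hbm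
    have : (e : ℕ) = b := cast_inj_lt k n (by have := e.2; omega) (by omega) hce
    exact ⟨e, Finset.mem_filter.2 ⟨heF, by omega⟩, this⟩

lemma good_emb_iff (F : Finset (Fin (k * n))) :
    Good k (k * n + 1) (emb k n F) 0 ↔
      ∀ j, 1 ≤ j → j ≤ k * n →
        j ≤ k * (F.filter (fun i : Fin (k * n) => (i : ℕ) < j)).card := by
  constructor
  · intro h j h1 h2
    have := h j h1 (by omega)
    rw [zero_add, pf_zero, sub_zero, pf_formula, count_emb k n F j h2] at this
    have h3 : (j : ℤ) ≤ k * (F.filter (fun i : Fin (k * n) => (i : ℕ) < j)).card := by linarith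
    exact_mod_cast h3
  · intro h j h1 h2
    have hj : j ≤ k * n := by omega
    have h3 := h j h1 hj
    rw [zero_add, pf_zero, sub_zero, pf_formula, count_emb k n F j hj]
    have h4 : (j : ℤ) ≤ k * (F.filter (fun i : Fin (k * n) => (i : ℕ) < j)).card := by
      exact_mod_cast h3
    linarith

lemma not_mem_of_good (hk : 1 ≤ k) (hn : 1 ≤ n) (E' : Finset (ZMod (k * n + 1)))
    (hcard : E'.card = n) (hg : Good k (k * n + 1) E' 0) :
    ((k * n : ℕ) : ZMod (k * n + 1)) ∉ E' := by
  intro hmem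
  have hkn : 1 ≤ k * n := Nat.one_le_iff_ne_zero.2 (by positivity)
  have h1 : pf k (k * n + 1) E' (k * n + 1) = -1 := by
    rw [pf_m, sum_dfun, hcard]
    push_cast; ring
  have h2 : 0 ≤ pf k (k * n + 1) E' (k * n) := by
    have := hg (k * n) hkn (by omega)
    rwa [zero_add, pf_zero, sub_zero] at this
  have h3 := pf_succ k (k * n + 1) E' (k * n)
  rw [dfun, if_pos hmem] at h3
  have hk' : (1 : ℤ) ≤ k := by exact_mod_cast hk
  linarith

end Emb

end NKC

open NKC in
/-- For all integers `n ≥ 1` and `k ≥ 1`, `n` times the number of subsets `E` of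
`{0, 1, ..., kn-1}` of cardinality `n` satisfying the ballot condition — for every
`j` with `1 ≤ j ≤ kn`, `k` times the number of elements of `E` smaller than `j` is
at least `j` — equals `C(kn, n-1)`; i.e. the number of such subsets is the
`(n,k)`-th Catalan number `(1/n)·C(kn, n-1)`. -/
theorem nk_catalan_counts_ballot_subsets (n k : ℕ) (hn : 1 ≤ n) (hk : 1 ≤ k) :
    n * ({E : Finset (Fin (k * n)) |
        E.card = n ∧
        ∀ j : ℕ, 1 ≤ j → j ≤ k * n →
          j ≤ k * (E.filter (fun i => i.val < j)).card} : Set _).ncard =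
      (k * n).choose (n - 1) := by
  classical
  set m := k * n + 1 with hmdef
  set Sfin : Finset (Finset (Fin (k * n))) :=
    (Finset.powersetCard n (Finset.univ : Finset (Fin (k * n)))).filter
      (fun E => ∀ j : ℕ, 1 ≤ j → j ≤ k * n →
        j ≤ k * (E.filter (fun i => i.val < j)).card) with hSfin
  set G : Finset (Finset (ZMod m)) :=
    (Finset.powersetCard n (Finset.univ : Finset (ZMod m))).filter
      (fun E => Good k m E 0) with hGdef
  -- the theorem's set is Sfin
  have hset : ({E : Finset (Fin (k * n)) |
      E.card = n ∧
      ∀ j : ℕ, 1 ≤ j → j ≤ k * n →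
        j ≤ k * (E.filter (fun i => i.val < j)).card} : Set _) = ↑Sfin := by
    ext E
    simp only [Set.mem_setOf_eq, hSfin, Finset.coe_filter, Finset.mem_powersetCard_univ]
  rw [hset, Set.ncard_coe_finset]
  -- Sfin.card = G.card via emb/backSet
  have hSG : Sfin.card = G.card := by
    refine Finset.card_nbij' (emb k n) (backSet k n) ?_ ?_ ?_ ?_
    · intro F hF
      obtain ⟨hFc, hFb⟩ := Finset.mem_filter.1 hF
      have hFc' : F.card = n := Finset.mem_powersetCard_univ.1 hFc
      refine Finset.mem_filter.2 ⟨?_, ?_⟩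
      · exact Finset.mem_powersetCard_univ.2 (by rw [card_emb, hFc'])
      · exact (good_emb_iff k n F).2 hFb
    · intro E' hE'
      obtain ⟨hEc, hEg⟩ := Finset.mem_filter.1 hE'
      have hEc' : E'.card = n := Finset.mem_powersetCard_univ.1 hEc
      have htop := not_mem_of_good k n hk hn E' hEc' hEg
      have heb := emb_back k n E' htop
      refine Finset.mem_filter.2 ⟨?_, ?_⟩
      · refine Finset.mem_powersetCard_univ.2 ?_
        have : (emb k n (backSet k n E')).card = E'.card := by rw [heb]
        rw [card_emb] at this
        rw [this, hEc']
      · refine (good_emb_iff k n (backSet k n E')).1 ?_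
        rwa [heb]
    · intro F hF
      exact back_emb k n F
    · intro E' hE'
      obtain ⟨hEc, hEg⟩ := Finset.mem_filter.1 hE'
      have hEc' : E'.card = n := Finset.mem_powersetCard_univ.1 hEc
      exact emb_back k n E' (not_mem_of_good k n hk hn E' hEc' hEg)
  -- the cycle lemma count
  have hcount : m.choose n = G.card * m := by
    have := card_powersetCard_eq k m (n := n) rfl
    rwa [Finset.card_powersetCard, Finset.card_univ, ZMod.card] at this
  -- arithmetic
  have hchoose : m * ((k * n).choose (n - 1)) = m.choose n * n := by
    have h := Nat.add_one_mul_choose_eq (k * n) (n - 1)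
    have hn1 : n - 1 + 1 = n := by omega
    simp only [Nat.succ_eq_add_one, hn1] at h
    rw [hmdef]
    exact h
  rw [hSG]
  have hm0 : 0 < m := by omega
  apply Nat.eq_of_mul_eq_mul_left hm0
  calc m * (n * G.card) = (G.card * m) * n := by ring
    _ = m.choose n * n := by rw [← hcount]
    _ = m * ((k * n).choose (n - 1)) := hchoose.symm
end

section
/- For all integers n ≥ 1 and k ≥ 1, the number of finite sets P of words over a k-letter alphabet (i.e., finite subsets of List (Fin k)) such that |P| = n and P is closed under taking prefixes (in particular the empty word lies in P, and the word obtained by deleting the last letter of any nonempty word of P again lies in P) is equal to (1/n)·C(kn, n-1); equivalently, n times this count equals C(kn, n-1). -/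
/-!
A prefix-closed set of `n` words over `Fin k` is the set of internal nodes of a unique `k`-ary
tree with `n` internal nodes. Listing the nodes of such a tree in preorder, `true` for an internal
node and `false` for a leaf, identifies these trees with the Łukasiewicz words with `n` letters
`true`: weighting `true` by `k - 1` and `false` by `-1`, the words of total weight `-1` all of
whose proper prefixes have nonnegative weight; such a word has length `k n + 1`. By the cycle
lemma, exactly one of the `k n + 1` rotations of any word of length `k n + 1` with `n` letters
`true` is a Łukasiewicz word, so `k n + 1` times the number of trees is
`C(k n + 1, n) = (k n + 1) C(k n, n - 1) / n`.
-/

namespace List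

def PrefixSumsNonneg (l : List ℤ) : Prop := ∀ i < l.length, 0 ≤ (l.take i).sum

lemma rotate_eq_take_drop_append_self {α : Type*} {l : List α} {r : ℕ} (hr : r ≤ l.length) :
    l.rotate r = ((l ++ l).drop r).take l.length := by
  rw [rotate_eq_drop_append_take hr, drop_append_of_le_length hr, take_append,
    take_of_length_le (l := drop r l) (by simp), length_drop, Nat.sub_sub_self hr]

lemma sum_take_rotate {l : List ℤ} {r i : ℕ} (hr : r ≤ l.length) (hi : i ≤ l.length) :
    ((l.rotate r).take i).sum = ((l ++ l).take (r + i)).sum - ((l ++ l).take r).sum := by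
  rw [rotate_eq_take_drop_append_self hr, take_take, min_eq_left hi, take_add, sum_append]
  ring

lemma sum_take_append_self_length_add {l : List ℤ} {i : ℕ} (hi : i ≤ l.length) :
    ((l ++ l).take (l.length + i)).sum = l.sum + ((l ++ l).take i).sum := by
  rw [take_length_add_append, sum_append, take_append_of_le_length hi]

theorem existsUnique_rotate_prefixSumsNonneg {l : List ℤ} (h : l.sum = -1) :
    ∃! r, r < l.length ∧ (l.rotate r).PrefixSumsNonneg := by
  set S : ℕ → ℤ := fun i => ((l ++ l).take i).sum with hS
  set m := l.length
  have hlen : 0 < m := length_pos_iff.mpr (by rintro rfl; simp at h)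
  have hwrap : ∀ i ≤ m, S (m + i) = S i - 1 := fun i hi => by
    simp only [hS, m, sum_take_append_self_length_add hi, h]; ring
  have hrot : ∀ r < m, ∀ i < m, ((l.rotate r).take i).sum = S (r + i) - S r := fun r hr i hi =>
    sum_take_rotate hr.le hi.le
  refine existsUnique_of_exists_of_unique ?_ ?_
  · have hmin : ∃ r, r < m ∧ ∀ i < m, S r ≤ S i := by
      obtain ⟨r, hr, hmin⟩ := Finset.exists_min_image (Finset.range m) S ⟨0, by simpa⟩
      exact ⟨r, by simpa using hr, fun i hi => hmin i (by simpa using hi)⟩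
    classical
    -- rotate at the first index where the prefix sums attain their minimum over one period
    obtain ⟨hr, hrmin⟩ := Nat.find_spec hmin
    refine ⟨Nat.find hmin, hr, fun i hi => ?_⟩
    rw [length_rotate] at hi
    rw [hrot _ hr i hi, sub_nonneg]
    rcases lt_or_ge (Nat.find hmin + i) m with hlt | hge
    · exact hrmin _ hlt
    · obtain ⟨j, hj⟩ := Nat.exists_eq_add_of_le hge
      have hjr : j < Nat.find hmin := by omega
      have hlt : S (Nat.find hmin) < S j := by
        have := Nat.find_min hmin hjr
        push Not at this
        obtain ⟨i', hi', hi'lt⟩ := this (by omega)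
        exact (hrmin i' hi').trans_lt hi'lt
      rw [hj, hwrap j (by omega)]
      omega
  · rintro r₁ r₂ ⟨h₁, hg₁⟩ ⟨h₂, hg₂⟩
    by_contra hne
    wlog hlt : r₁ < r₂ generalizing r₁ r₂
    · exact this r₂ r₁ h₂ hg₂ h₁ hg₁ (Ne.symm hne) (by omega)
    -- the prefix of the rotation by `r₁` ending at `r₂`, and that of the rotation by `r₂`
    -- wrapping around to `r₁`, have weights `S r₂ - S r₁` and `S r₁ - 1 - S r₂`
    have e₁ := hg₁ (r₂ - r₁) (by simp; omega)
    have e₂ := hg₂ (m - r₂ + r₁) (by simp; omega)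
    rw [hrot _ h₁ _ (by omega), Nat.add_sub_cancel' hlt.le] at e₁
    rw [hrot _ h₂ _ (by omega), show r₂ + (m - r₂ + r₁) = m + r₁ by omega,
      hwrap _ h₁.le] at e₂
    omega

lemma count_true_ofFn {m : ℕ} (g : Fin m → Bool) :
    (ofFn g).count true = (Finset.univ.filter fun i => g i = true).card := by
  induction m with
  | zero => simp
  | succ m ih =>
    rw [ofFn_succ, count_cons, ih, Finset.card_filter, Finset.card_filter, Fin.sum_univ_succ]
    cases g 0 <;> simp [add_comm]

lemma card_length_count_true (m n : ℕ) :
    Nat.card {w : List Bool // w.length = m ∧ w.count true = n} = m.choose n := by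
  classical
  have hsets : Nat.card {s : Finset (Fin m) // s.card = n} = m.choose n := by
    rw [Nat.card_eq_fintype_card, Fintype.card_finset_len, Fintype.card_fin]
  rw [← hsets]
  symm
  refine Nat.card_eq_of_bijective
    (fun s => ⟨ofFn fun i => decide (i ∈ s.1), by simp, by simp [count_true_ofFn, s.2]⟩)
    ⟨?_, ?_⟩
  · intro s s' h
    ext i
    simpa using congrFun (ofFn_injective (congrArg Subtype.val h)) i
  · rintro ⟨w, rfl, rfl⟩
    refine ⟨⟨Finset.univ.filter fun i => w[i] = true, ?_⟩, ?_⟩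
    · conv_rhs => rw [← ofFn_getElem (xs := w)]
      rw [count_true_ofFn]
      rfl
    · ext1
      simp [ofFn_getElem]

end List

section ForestCode

open List

variable {α : Type*} (ar : α → ℕ)

/-- `IsForestCode ar j w`: `w` lists in preorder the nodes of a sequence of `j` plane trees in
which a node `a` has `ar a` children; reading `a` replaces one pending tree by its `ar a`
subtrees. -/
def IsForestCode : ℕ → List α → Prop
  | 0, [] => True
  | 0, _ :: _ => False
  | _ + 1, [] => False
  | j + 1, a :: w => IsForestCode (ar a + j) w

def steps (w : List α) : List ℤ := w.map fun a => (ar a : ℤ) - 1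

variable {ar}

@[simp] lemma isForestCode_nil {j : ℕ} : IsForestCode ar j [] ↔ j = 0 := by
  cases j <;> simp [IsForestCode]

@[simp] lemma isForestCode_zero_cons {a : α} {w : List α} : ¬IsForestCode ar 0 (a :: w) :=
  id

@[simp] lemma isForestCode_succ_cons {j : ℕ} {a : α} {w : List α} :
    IsForestCode ar (j + 1) (a :: w) ↔ IsForestCode ar (ar a + j) w :=
  Iff.rfl

lemma IsForestCode.ne_zero {j : ℕ} {a : α} {w : List α} (h : IsForestCode ar j (a :: w)) :
    j ≠ 0 := by
  rintro rfl
  exact h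

lemma IsForestCode.append {i j : ℕ} {u v : List α} (hu : IsForestCode ar i u)
    (hv : IsForestCode ar j v) : IsForestCode ar (i + j) (u ++ v) := by
  induction u generalizing i with
  | nil => simp_all
  | cons a u ih =>
    obtain ⟨i, rfl⟩ := Nat.exists_eq_add_one_of_ne_zero hu.ne_zero
    rw [Nat.add_right_comm, cons_append, isForestCode_succ_cons, ← add_assoc]
    exact ih hu

lemma isForestCode_flatten {L : List (List α)} (hL : ∀ u ∈ L, IsForestCode ar 1 u) :
    IsForestCode ar L.length L.flatten := by
  induction L with
  | nil => simp
  | cons u L ih =>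
    rw [length_cons, flatten_cons, add_comm]
    exact (hL u mem_cons_self).append (ih fun v hv => hL v (mem_cons_of_mem u hv))

lemma sum_steps (w : List α) : (steps ar w).sum = (w.map ar).sum - w.length := by
  induction w with
  | nil => simp [steps]
  | cons a w ih =>
    simp only [steps] at ih ⊢
    simp [ih]
    ring

lemma isForestCode_iff {j : ℕ} {w : List α} :
    IsForestCode ar j w ↔
      (∀ i < w.length, 1 - (j : ℤ) ≤ ((steps ar w).take i).sum) ∧
        (steps ar w).sum = -j := by
  induction w generalizing j with
  | nil => simp [steps]
  | cons a w ih =>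
    cases j with
    | zero =>
      simp only [isForestCode_zero_cons, false_iff, not_and]
      intro h
      simpa using h 0 (by simp)
    | succ j =>
      simp only [isForestCode_succ_cons, ih, steps, length_cons, Nat.forall_lt_succ_left,
        map_cons, take_succ_cons, sum_cons, take_zero, sum_nil]
      push_cast
      constructor
      · rintro ⟨hpre, hsum⟩
        exact ⟨⟨by omega, fun i hi => by linarith [hpre i hi]⟩, by linarith⟩
      · rintro ⟨⟨-, hpre⟩, hsum⟩
        exact ⟨fun i hi => by linarith [hpre i hi], by linarith⟩

lemma isForestCode_one_iff {w : List α} :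
    IsForestCode ar 1 w ↔ (steps ar w).PrefixSumsNonneg ∧ (steps ar w).sum = -1 := by
  simp [isForestCode_iff, List.PrefixSumsNonneg, steps]

lemma existsUnique_rotate_isForestCode {w : List α} (hw : (steps ar w).sum = -1) :
    ∃! r, r < w.length ∧ IsForestCode ar 1 (w.rotate r) := by
  have hrot : ∀ r, steps ar (w.rotate r) = (steps ar w).rotate r := fun r => map_rotate _ _ _
  have hsum : ∀ r, ((steps ar w).rotate r).sum = -1 := fun r => (rotate_perm _ r).sum_eq.trans hw
  simp only [isForestCode_one_iff, hrot, hsum, and_true]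
  simpa [steps] using existsUnique_rotate_prefixSumsNonneg hw

theorem card_eq_mul_card_isForestCode {S : Set (List α)} {m : ℕ}
    (hlen : ∀ w ∈ S, w.length = m) (hsum : ∀ w ∈ S, (steps ar w).sum = -1)
    (hrot : ∀ w ∈ S, ∀ r, w.rotate r ∈ S) :
    Nat.card S = m * Nat.card {w ∈ S | IsForestCode ar 1 w} := by
  have hcycle : ∀ w ∈ S, ∀ r s, r + s = m → (w.rotate r).rotate s = w := by
    intro w hw r s h
    rw [rotate_rotate, h, ← hlen w hw, rotate_length]
  rw [mul_comm, ← Nat.card_fin m, ← Nat.card_prod]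
  symm
  refine Nat.card_eq_of_bijective
    (fun p => ⟨p.1.1.rotate (m - p.2), hrot _ p.1.2.1 _⟩) ⟨?_, ?_⟩
  · rintro ⟨⟨g, hgS, hg⟩, r⟩ ⟨⟨g', hgS', hg'⟩, r'⟩ h
    have hw : g.rotate (m - r) = g'.rotate (m - r') := congrArg Subtype.val h
    have hwS := hrot g hgS (m - r)
    have hr : (g.rotate (m - r)).rotate r = g := hcycle g hgS _ _ (by omega)
    have hr' : (g.rotate (m - r)).rotate r' = g' := hw ▸ hcycle g' hgS' _ _ (by omega)
    obtain rfl : r = r' := Fin.ext <|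
      (existsUnique_rotate_isForestCode (hsum _ hwS)).unique
        ⟨by simp [hlen _ hwS], by rwa [hr]⟩ ⟨by simp [hlen _ hwS], by rwa [hr']⟩
    obtain rfl : g = g' := hr.symm.trans hr'
    rfl
  · rintro ⟨w, hw⟩
    obtain ⟨r, ⟨hr, hgood⟩, -⟩ := existsUnique_rotate_isForestCode (hsum w hw)
    rw [hlen w hw] at hr
    exact ⟨⟨⟨w.rotate r, hrot w hw r, hgood⟩, ⟨r, hr⟩⟩,
      Subtype.ext (show (w.rotate r).rotate (m - r) = w from hcycle w hw _ _ (by omega))⟩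

end ForestCode

namespace Finset

variable {α : Type*}

def IsPrefixClosed (P : Finset (List α)) : Prop := ∀ w ∈ P, ∀ p, p <+: w → p ∈ P

noncomputable def children (P : Finset (List α)) (a : α) : Finset (List α) :=
  P.preimage (List.cons a) List.cons_injective.injOn

@[simp] lemma mem_children {P : Finset (List α)} {a : α} {w : List α} :
    w ∈ children P a ↔ a :: w ∈ P :=
  mem_preimage

lemma IsPrefixClosed.children {P : Finset (List α)} (hP : P.IsPrefixClosed) (a : α) :
    (P.children a).IsPrefixClosed := fun _ hw _ hp =>
  mem_children.mpr (hP _ (mem_children.mp hw) _ (List.cons_prefix_cons.mpr ⟨rfl, hp⟩))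

variable [DecidableEq α] [Fintype α]

def addRoot (Q : α → Finset (List α)) : Finset (List α) :=
  insert [] (univ.biUnion fun a => (Q a).map ⟨List.cons a, List.cons_injective⟩)

@[simp] lemma nil_mem_addRoot (Q : α → Finset (List α)) : [] ∈ addRoot Q :=
  mem_insert_self _ _

@[simp] lemma cons_mem_addRoot {Q : α → Finset (List α)} {a : α} {w : List α} :
    a :: w ∈ addRoot Q ↔ w ∈ Q a := by
  simp [addRoot]

lemma card_addRoot (Q : α → Finset (List α)) : (addRoot Q).card = ∑ a, (Q a).card + 1 := by
  rw [addRoot, card_insert_of_notMem (by simp), card_biUnion]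
  · simp
  · intro a _ b _ hab
    simp [disjoint_left, hab.symm]

lemma addRoot_injective : Function.Injective (addRoot (α := α)) := fun Q Q' h =>
  funext fun a => ext fun w => by rw [← cons_mem_addRoot, h, cons_mem_addRoot]

lemma isPrefixClosed_addRoot {Q : α → Finset (List α)} (hQ : ∀ a, (Q a).IsPrefixClosed) :
    (addRoot Q).IsPrefixClosed := by
  rintro (_ | ⟨a, w⟩) hw p hp
  · rw [List.prefix_nil.mp hp]; exact hw
  · rcases p with _ | ⟨b, p⟩
    · exact nil_mem_addRoot Q
    · obtain ⟨rfl, hpw⟩ := List.cons_prefix_cons.mp hp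
      exact cons_mem_addRoot.mpr (hQ _ w (cons_mem_addRoot.mp hw) p hpw)

lemma IsPrefixClosed.addRoot_children {P : Finset (List α)} (hP : P.IsPrefixClosed)
    (hne : P.Nonempty) : addRoot P.children = P := by
  ext (_ | ⟨a, w⟩)
  · obtain ⟨w, hw⟩ := hne
    simpa using hP w hw [] List.nil_prefix
  · simp

lemma IsPrefixClosed.card_children_lt {P : Finset (List α)} (hP : P.IsPrefixClosed)
    (hne : P.Nonempty) (a : α) : (P.children a).card < P.card := by
  conv_rhs => rw [← hP.addRoot_children hne, card_addRoot]
  exact Nat.lt_succ_of_le <|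
    single_le_sum (f := fun b => (P.children b).card) (fun _ _ => Nat.zero_le _) (mem_univ a)

end Finset

inductive KTree (k : ℕ) : Type
  | leaf : KTree k
  | node : (Fin k → KTree k) → KTree k

namespace KTree

variable {k : ℕ}

def numNodes : KTree k → ℕ
  | leaf => 0
  | node c => ∑ i, numNodes (c i) + 1

def arity (k : ℕ) : Bool → ℕ
  | true => k
  | false => 0

/-- The preorder traversal, writing `true` for an internal node and `false` for a leaf. -/
def code : KTree k → List Bool
  | leaf => [false]
  | node c => true :: (List.ofFn fun i => code (c i)).flatten

def forestCode {j : ℕ} (ts : Fin j → KTree k) : List Bool :=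
  (List.ofFn fun i => code (ts i)).flatten

lemma code_node (c : Fin k → KTree k) : code (node c) = true :: forestCode c := rfl

@[simp] lemma forestCode_cons {j : ℕ} (t : KTree k) (ts : Fin j → KTree k) :
    forestCode (Fin.cons t ts) = code t ++ forestCode ts := by
  simp [forestCode, List.ofFn_succ]

@[simp] lemma forestCode_append {i j : ℕ} (us : Fin i → KTree k) (vs : Fin j → KTree k) :
    forestCode (Fin.append us vs) = forestCode us ++ forestCode vs := by
  simp [forestCode, List.ofFn_add, Fin.append_right]

lemma count_code (t : KTree k) : (code t).count true = t.numNodes := by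
  induction t with
  | leaf => rfl
  | node c ih => simp [code, numNodes, List.count_flatten, List.sum_ofFn, ih]

lemma sum_map_arity (w : List Bool) : (w.map (arity k)).sum = k * w.count true := by
  induction w with
  | nil => simp
  | cons b w ih =>
    cases b
    · simpa [arity] using ih
    · simp [arity, ih]; ring

lemma isForestCode_code (t : KTree k) : IsForestCode (arity k) 1 (code t) := by
  induction t with
  | leaf => exact isForestCode_nil.mpr rfl
  | node c ih =>
    simpa [code_node, forestCode, arity] using
      isForestCode_flatten (ar := arity k) (L := List.ofFn fun i => code (c i))
        (by simpa using ih)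

lemma existsUnique_forestCode_eq {w : List Bool} {j : ℕ} (hw : IsForestCode (arity k) j w) :
    ∃! ts : Fin j → KTree k, forestCode ts = w := by
  induction w generalizing j with
  | nil =>
    obtain rfl := isForestCode_nil.mp hw
    exact ⟨Fin.elim0, rfl, fun _ _ => Subsingleton.elim _ _⟩
  | cons b w ih =>
    obtain ⟨j, rfl⟩ := Nat.exists_eq_add_one_of_ne_zero hw.ne_zero
    rw [isForestCode_succ_cons] at hw
    cases b with
    | false =>
      rw [arity, zero_add] at hw
      obtain ⟨ts, hts, huniq⟩ := ih hw
      refine ⟨Fin.cons leaf ts, by simp [code, hts], Fin.consCases fun t ts' h => ?_⟩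
      cases t with
      | leaf => simpa [code, Fin.cons_inj] using huniq ts' (by simpa [code] using h)
      | node c => simp [code_node] at h
    | true =>
      rw [arity] at hw
      obtain ⟨ts, hts, huniq⟩ := ih hw
      refine ⟨Fin.cons (node fun i => ts (Fin.castAdd j i)) fun i => ts (Fin.natAdd k i),
        by simp [code_node, ← hts, ← forestCode_append, Fin.append_castAdd_natAdd],
        Fin.consCases fun t ts' h => ?_⟩
      cases t with
      | leaf => simp [code] at h
      | node c =>
        rw [forestCode_cons, code_node, List.cons_append, List.cons.injEq,
          ← forestCode_append] at h
        obtain rfl := huniq _ h.2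
        simp [Fin.append_left, Fin.append_right]

lemma forestCode_fin_one (ts : Fin 1 → KTree k) : forestCode ts = code (ts 0) := by
  simp [forestCode]

lemma code_injective : Function.Injective (code (k := k)) := fun t s h => by
  have hts := (existsUnique_forestCode_eq (isForestCode_code s)).unique
    (y₁ := fun _ : Fin 1 => t) (y₂ := fun _ => s) (by rw [forestCode_fin_one, h])
    (forestCode_fin_one _)
  exact congrFun hts 0

lemma exists_code_eq {w : List Bool} (hw : IsForestCode (arity k) 1 w) :
    ∃ t : KTree k, code t = w :=
  let ⟨ts, hts, _⟩ := existsUnique_forestCode_eq hw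
  ⟨ts 0, (forestCode_fin_one ts).symm.trans hts⟩

lemma length_eq_of_isForestCode {w : List Bool} (hw : IsForestCode (arity k) 1 w) :
    w.length = k * w.count true + 1 := by
  have h := (isForestCode_one_iff.mp hw).2
  rw [sum_steps, sum_map_arity] at h
  push_cast at h
  omega

def nodes : KTree k → Finset (List (Fin k))
  | leaf => ∅
  | node c => Finset.addRoot fun i => nodes (c i)

lemma card_nodes (t : KTree k) : (nodes t).card = t.numNodes := by
  induction t with
  | leaf => rfl
  | node c ih => simp [nodes, numNodes, Finset.card_addRoot, ih]

lemma isPrefixClosed_nodes (t : KTree k) : (nodes t).IsPrefixClosed := by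
  induction t with
  | leaf => simp [nodes, Finset.IsPrefixClosed]
  | node c ih => exact Finset.isPrefixClosed_addRoot ih

lemma nodes_injective : Function.Injective (nodes (k := k)) := by
  intro t s h
  induction t generalizing s with
  | leaf =>
    cases s with
    | leaf => rfl
    | node c => simpa [nodes] using congrArg ([] ∈ ·) h
  | node c ih =>
    cases s with
    | leaf => simpa [nodes] using congrArg ([] ∈ ·) h
    | node c' =>
      exact congrArg node (funext fun i => ih i (congrFun (Finset.addRoot_injective h) i))

lemma exists_nodes_eq {P : Finset (List (Fin k))} (hP : P.IsPrefixClosed) :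
    ∃ t : KTree k, nodes t = P := by
  induction hcard : P.card using Nat.strong_induction_on generalizing P with
  | _ n ih =>
    rcases P.eq_empty_or_nonempty with rfl | hne
    · exact ⟨leaf, rfl⟩
    choose c hc using fun i =>
      ih _ (hcard ▸ hP.card_children_lt hne i : _ < n) (hP.children i) rfl
    exact ⟨node c, by simp only [nodes, hc, hP.addRoot_children hne]⟩

end KTree

open KTree

lemma card_isPrefixClosed_eq_card_numNodes (k n : ℕ) :
    Nat.card {P : Finset (List (Fin k)) // P.card = n ∧ P.IsPrefixClosed} =
      Nat.card {t : KTree k // t.numNodes = n} := by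
  refine (Nat.card_eq_of_bijective
    (fun t => ⟨nodes t.1, (card_nodes _).trans t.2, isPrefixClosed_nodes _⟩) ⟨?_, ?_⟩).symm
  · exact fun t s h => Subtype.ext (nodes_injective (congrArg Subtype.val h))
  · rintro ⟨P, hcard, hP⟩
    obtain ⟨t, ht⟩ := exists_nodes_eq hP
    exact ⟨⟨t, by rw [← card_nodes, ht, hcard]⟩, Subtype.ext ht⟩

lemma card_numNodes_eq_card_isForestCode (k n : ℕ) :
    Nat.card {t : KTree k // t.numNodes = n} =
      Nat.card {w : List Bool // IsForestCode (arity k) 1 w ∧ w.count true = n} := by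
  refine Nat.card_eq_of_bijective
    (fun t => ⟨code t.1, isForestCode_code _, (count_code _).trans t.2⟩) ⟨?_, ?_⟩
  · exact fun t s h => Subtype.ext (code_injective (congrArg Subtype.val h))
  · rintro ⟨w, hw, hcount⟩
    obtain ⟨t, ht⟩ := exists_code_eq hw
    exact ⟨⟨t, by rw [← count_code, ht, hcount]⟩, Subtype.ext ht⟩

lemma choose_eq_mul_card_isForestCode (k n : ℕ) :
    (k * n + 1).choose n = (k * n + 1) *
      Nat.card {w : List Bool // IsForestCode (arity k) 1 w ∧ w.count true = n} := by
  let S : Set (List Bool) := {w | w.length = k * n + 1 ∧ w.count true = n}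
  have hgood : {w ∈ S | IsForestCode (arity k) 1 w} =
      {w | IsForestCode (arity k) 1 w ∧ w.count true = n} := by
    ext w
    constructor
    · exact fun ⟨⟨_, hcount⟩, hw⟩ => ⟨hw, hcount⟩
    · rintro ⟨hw, hcount⟩
      exact ⟨⟨by rw [length_eq_of_isForestCode hw, hcount], hcount⟩, hw⟩
  have hcycle := card_eq_mul_card_isForestCode (ar := arity k) (S := S) (fun w hw => hw.1)
    (fun w hw => by rw [sum_steps, sum_map_arity, hw.1, hw.2]; push_cast; ring)
    (fun w hw r => ⟨by rw [List.length_rotate, hw.1],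
      by rw [(List.rotate_perm w r).count_eq, hw.2]⟩)
  rw [hgood] at hcycle
  rw [← List.card_length_count_true]
  exact hcycle

theorem nk_catalan_counts_prefix_closed_sets_general (n k : ℕ) (hn : 1 ≤ n) :
    n * ({P : Finset (List (Fin k)) |
        P.card = n ∧
        ∀ w ∈ P, ∀ p : List (Fin k), p <+: w → p ∈ P} : Set _).ncard =
      (k * n).choose (n - 1) := by
  change n * Nat.card {P : Finset (List (Fin k)) // P.card = n ∧ P.IsPrefixClosed} = _
  have hpascal : (k * n + 1) * (k * n).choose (n - 1) = (k * n + 1).choose n * n := by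
    simpa [Nat.sub_add_cancel hn] using Nat.add_one_mul_choose_eq (k * n) (n - 1)
  apply Nat.eq_of_mul_eq_mul_left (n := k * n + 1) (by omega)
  rw [hpascal, choose_eq_mul_card_isForestCode, ← card_numNodes_eq_card_isForestCode,
    ← card_isPrefixClosed_eq_card_numNodes]
  ring

/-- For all integers `n ≥ 1` and `k ≥ 1`, `n` times the number of finite sets `P` of
words over a `k`-letter alphabet with `|P| = n` that are closed under taking prefixes
(in particular the empty word lies in `P`, and deleting the last letter of any
nonempty word of `P` yields a word of `P`) equals `C(kn, n-1)`; i.e. the number of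
such prefix-closed sets is the `(n,k)`-th Catalan number `(1/n)·C(kn, n-1)`. -/
theorem nk_catalan_counts_prefix_closed_sets (n k : ℕ) (hn : 1 ≤ n) (hk : 1 ≤ k) :
    n * ({P : Finset (List (Fin k)) |
        P.card = n ∧
        ∀ w ∈ P, ∀ p : List (Fin k), p <+: w → p ∈ P} : Set _).ncard =
      (k * n).choose (n - 1) :=
  nk_catalan_counts_prefix_closed_sets_general n k hn
end
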